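/- Let m be a positive integer and let s, t be positive real numbers such that m/s + m/t ≤ 1 (i.e. the point (m,m) lies in the closure of the open region {(x,y) ∈ ℝ²_{≥0} : x/s + y/t < 1}). Then the number of pairs (x,y) of nonnegative integers with x/s + y/t < 1 is at least m(2m+1). (In the paper's notation: σ̄_{2,m} ≥ m(2m+1).) -/

import Mathlib

/-!
Row `y` of the region consists of the `x` with `x < s (1 - y/t)`, so it holds exactly
`⌈s (1 - y/t)⌉₊` lattice points. Pair row `y` with row `2m - 1 - y`: the two real lengths add up
to `2s - s(2m - 1)/t`, which exceeds `2m` because `m/s + m/t ≤ 1`; since `⌈a⌉₊ + ⌈b⌉₊ ≥ ⌈a + b⌉₊`,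
each pair of rows holds at least `2m + 1` points, and the `m` pairs give `m(2m + 1)`.
-/

open Finset

theorem nsmul_le_two_nsmul_sum_of_le_add_reflect {M : Type*} [AddCommMonoid M] [PartialOrder M]
    [IsOrderedAddMonoid M] {n : ℕ} {c : M} {g : ℕ → M}
    (h : ∀ y < n, c ≤ g y + g (n - 1 - y)) : n • c ≤ 2 • ∑ y ∈ range n, g y :=
  calc n • c = ∑ _y ∈ range n, c := by rw [sum_const, card_range]
    _ ≤ ∑ y ∈ range n, (g y + g (n - 1 - y)) := sum_le_sum fun y hy => h y (mem_range.mp hy)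
    _ = 2 • ∑ y ∈ range n, g y := by rw [sum_add_distrib, sum_range_reflect, two_nsmul]

theorem sum_range_le_ncard_setOf_fst_lt {f : ℕ → ℕ} (n : ℕ)
    (hfin : {p : ℕ × ℕ | p.1 < f p.2}.Finite) :
    ∑ y ∈ range n, f y ≤ {p : ℕ × ℕ | p.1 < f p.2}.ncard := by
  let rows : Finset (Σ _ : ℕ, ℕ) := (range n).sigma fun y => range (f y)
  calc ∑ y ∈ range n, f y = (rows : Set (Σ _ : ℕ, ℕ)).ncard := by
        rw [Set.ncard_coe_finset, card_sigma]; simp only [card_range]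
    _ ≤ _ := by
      refine Set.ncard_le_ncard_of_injOn (fun q => (q.2, q.1)) ?_ ?_ hfin
      · rintro ⟨y, x⟩ hq
        exact mem_range.mp (mem_sigma.mp hq).2
      · rintro ⟨y, x⟩ - ⟨y', x'⟩ - hq
        simp only [Prod.mk.injEq] at hq
        rw [hq.1, hq.2]

section Triangle

variable {s t : ℝ}

theorem div_add_div_lt_one_iff_lt_ceil (hs : 0 < s) (x y : ℕ) :
    (x : ℝ) / s + y / t < 1 ↔ x < ⌈s * (1 - y / t)⌉₊ := by
  rw [Nat.lt_ceil, ← div_lt_iff₀' hs, lt_sub_iff_add_lt]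

theorem finite_setOf_div_add_div_lt_one (hs : 0 < s) (ht : 0 < t) :
    {p : ℕ × ℕ | (p.1 : ℝ) / s + (p.2 : ℝ) / t < 1}.Finite := by
  refine ((Set.finite_Iio ⌈s⌉₊).prod (Set.finite_Iio ⌈t⌉₊)).subset fun p hp => ?_
  have hx : 0 ≤ (p.1 : ℝ) / s := by positivity
  have hy : 0 ≤ (p.2 : ℝ) / t := by positivity
  exact ⟨Nat.lt_ceil.mpr ((div_lt_one hs).mp (by linarith [hp.out])),
    Nat.lt_ceil.mpr ((div_lt_one ht).mp (by linarith [hp.out]))⟩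

theorem two_mul_add_one_le_ceil_add_ceil (hs : 0 < s) (ht : 0 < t) {m : ℕ}
    (h : (m : ℝ) / s + (m : ℝ) / t ≤ 1) {y z : ℕ} (hyz : y + z + 1 = 2 * m) :
    2 * m + 1 ≤ ⌈s * (1 - y / t)⌉₊ + ⌈s * (1 - z / t)⌉₊ := by
  have hst : (m : ℝ) * t + m * s ≤ s * t := by
    rw [div_add_div _ _ hs.ne' ht.ne', div_le_one (mul_pos hs ht)] at h
    linarith
  have hyz' : (y : ℝ) + z + 1 = 2 * m := by exact_mod_cast hyz
  have hlen : (2 * m : ℝ) < s * (1 - y / t) + s * (1 - z / t) := by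
    have hsum : s * (1 - y / t) + s * (1 - z / t) = (2 * s * t - s * (y + z)) / t := by
      field_simp
      ring
    rw [hsum, lt_div_iff₀ ht]
    nlinarith
  exact (Nat.lt_ceil.mpr (by exact_mod_cast hlen)).trans_le (Nat.ceil_add_le _ _)

end Triangle

theorem stmt_1_general (m : ℕ) (s t : ℝ) (hs : 0 < s) (ht : 0 < t)
    (h : (m : ℝ) / s + (m : ℝ) / t ≤ 1) :
    m * (2 * m + 1) ≤
      Set.ncard {p : ℕ × ℕ | (p.1 : ℝ) / s + (p.2 : ℝ) / t < 1} := by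
  let row : ℕ → ℕ := fun y => ⌈s * (1 - y / t)⌉₊
  have hregion : {p : ℕ × ℕ | (p.1 : ℝ) / s + (p.2 : ℝ) / t < 1} = {p | p.1 < row p.2} :=
    Set.ext fun p => div_add_div_lt_one_iff_lt_ceil hs p.1 p.2
  have hpairs : (2 * m) • (2 * m + 1) ≤ 2 • ∑ y ∈ range (2 * m), row y :=
    nsmul_le_two_nsmul_sum_of_le_add_reflect fun y hy =>
      two_mul_add_one_le_ceil_add_ceil hs ht h (by omega)
  have hrows := sum_range_le_ncard_setOf_fst_lt (2 * m)
    (hregion ▸ finite_setOf_div_add_div_lt_one hs ht)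
  rw [smul_eq_mul, smul_eq_mul, mul_assoc] at hpairs
  rw [hregion]
  linarith

/-- σ̄_{2,m} ≥ m(2m+1) : if (m,m) lies in the closure of the open region
{(x,y) : x/s + y/t < 1}, then the number of lattice points of that region
is at least m(2m+1). -/
theorem stmt_1 (m : ℕ) (hm : 0 < m) (s t : ℝ) (hs : 0 < s) (ht : 0 < t)
    (h : (m : ℝ) / s + (m : ℝ) / t ≤ 1) :
    m * (2 * m + 1) ≤
      Set.ncard {p : ℕ × ℕ | (p.1 : ℝ) / s + (p.2 : ℝ) / t < 1} :=
  stmt_1_general m s t hs ht h
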